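/- arXiv:2403.13230 — 5 statements merged into one kernel-verified Lean document; each statement's English description precedes it below -/
import Mathlib

section
/- Let C, P, P̃ ∈ E with P ≠ P̃, let u := ‖P − P̃‖⁻¹ • (P − P̃), and let d̂ ∈ ℝ satisfy dist C P ≤ d̂. Then dist P P̃ ≤ R(C, d̂, P̃, u). (Per-challenger soundness: an honest challenger's directional uncertainty in the true direction of Waldo upper-bounds the true deviation.) -/
open EuclideanSpace

/-- The plane. -/
local notation "E" => EuclideanSpace ℝ (Fin 2)

/-- Directional uncertainty `R(C, d̂, P̃, u) = s + sqrt (d̂² − d̃² + s²)`,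
where `d̃ = ‖C − P̃‖` and `s = ⟪C − P̃, u⟫_ℝ`. -/
noncomputable def dirUnc (C Pt : EuclideanSpace ℝ (Fin 2)) (dhat : ℝ)
    (u : EuclideanSpace ℝ (Fin 2)) : ℝ :=
  (inner ℝ (C - Pt) u : ℝ) +
    Real.sqrt (dhat ^ 2 - ‖C - Pt‖ ^ 2 + (inner ℝ (C - Pt) u : ℝ) ^ 2)

/-!
The true position `P` lies on the ray from `P̃` in direction `u` at distance `t = ‖P − P̃‖`.
Writing `w = C − P̃` and `s = ⟪w, u⟫`, the honesty condition `‖w − t u‖ ≤ d̂` expands to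
`(t − s)² ≤ d̂² − ‖w‖² + s²`, and taking square roots gives `t ≤ s + √(d̂² − ‖w‖² + s²)`.
-/

section

variable {F : Type*} [NormedAddCommGroup F] [InnerProductSpace ℝ F]

theorem norm_sub_smul_sq_of_norm_eq_one {u : F} (hu : ‖u‖ = 1) (w : F) (t : ℝ) :
    ‖w - t • u‖ ^ 2 = ‖w‖ ^ 2 - 2 * t * inner ℝ w u + t ^ 2 := by
  rw [norm_sub_sq_real, inner_smul_right, norm_smul, mul_pow, hu, Real.norm_eq_abs, sq_abs]
  ring

theorem le_inner_add_sqrt_of_norm_sub_smul_le {u w : F} (hu : ‖u‖ = 1) {t d : ℝ}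
    (h : ‖w - t • u‖ ≤ d) :
    t ≤ inner ℝ w u + √(d ^ 2 - ‖w‖ ^ 2 + inner ℝ w u ^ 2) := by
  have hsq : (t - inner ℝ w u) ^ 2 ≤ d ^ 2 - ‖w‖ ^ 2 + inner ℝ w u ^ 2 := by
    have := pow_le_pow_left₀ (norm_nonneg _) h 2
    rw [norm_sub_smul_sq_of_norm_eq_one hu] at this
    linarith
  linarith [le_abs_self (t - inner ℝ w u), Real.abs_le_sqrt hsq]

end

/-- Per-challenger soundness: an honest challenger's directional uncertainty in
the true direction of Waldo upper-bounds the true deviation. -/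
theorem per_challenger_soundness (C P Pt : E) (hne : P ≠ Pt) (dhat : ℝ)
    (h : dist C P ≤ dhat) :
    dist P Pt ≤ dirUnc C Pt dhat (‖P - Pt‖⁻¹ • (P - Pt)) := by
  have hv : P - Pt ≠ 0 := sub_ne_zero.mpr hne
  have hu : ‖‖P - Pt‖⁻¹ • (P - Pt)‖ = 1 := norm_smul_inv_norm hv
  have hCP : C - Pt - ‖P - Pt‖ • ‖P - Pt‖⁻¹ • (P - Pt) = C - P := by
    rw [smul_inv_smul₀ (norm_ne_zero_iff.mpr hv), sub_sub_sub_cancel_right]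
  rw [dist_eq_norm, dirUnc]
  apply le_inner_add_sqrt_of_norm_sub_smul_le hu
  rwa [hCP, ← dist_eq_norm]
end

section
/- Let E = EuclideanSpace ℝ (Fin 2) and let C, P, P̃ ∈ E and d̂ ∈ ℝ with dist C P ≤ d̂. Then dist P P̃ ≤ Real.sqrt (d̂² − (dist C P̃)²·sin²(∠ C P̃ P)) + (dist C P̃)·cos(∠ C P̃ P), where ∠ C P̃ P is the Euclidean angle at the vertex P̃ (Mathlib's EuclideanGeometry.angle, valued in [0, π]). -/
/-- The plane. -/
local notation "E" => EuclideanSpace ℝ (Fin 2)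

/-- The paper's trigonometric uncertainty bound (Equations 4–6), stated with the
unsigned angle at the claimed location `P̃` between the challenger `C` and the
true location `P`. -/
theorem uncertainty_bound_angle (C P Pt : E) (dhat : ℝ) (h : dist C P ≤ dhat) :
    dist P Pt ≤
      Real.sqrt (dhat ^ 2 -
          (dist C Pt) ^ 2 * Real.sin (EuclideanGeometry.angle C Pt P) ^ 2) +
        (dist C Pt) * Real.cos (EuclideanGeometry.angle C Pt P) := by
  set θ := EuclideanGeometry.angle C Pt P with hθ
  set a := dist P Pt with ha
  set b := dist C Pt with hb
  have hlc : dist C P ^ 2 = b ^ 2 + a ^ 2 - 2 * b * a * Real.cos θ :=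
    by have := EuclideanGeometry.law_cos C Pt P; nlinarith [this]
  have hd2 : dist C P ^ 2 ≤ dhat ^ 2 :=
    pow_le_pow_left₀ dist_nonneg h 2
  have hsin : Real.sin θ ^ 2 = 1 - Real.cos θ ^ 2 := by
    have := Real.sin_sq_add_cos_sq θ; linarith
  have key : (a - b * Real.cos θ) ^ 2 ≤ dhat ^ 2 - b ^ 2 * Real.sin θ ^ 2 := by
    rw [hsin]; nlinarith [hlc, hd2]
  have h1 : a - b * Real.cos θ ≤ Real.sqrt (dhat ^ 2 - b ^ 2 * Real.sin θ ^ 2) := by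
    calc a - b * Real.cos θ ≤ |a - b * Real.cos θ| := le_abs_self _
      _ = Real.sqrt ((a - b * Real.cos θ) ^ 2) := (Real.sqrt_sq_eq_abs _).symm
      _ ≤ _ := Real.sqrt_le_sqrt key
  linarith
end

section
/- Suppose d̃ ≤ d̂, let u be a unit vector and let r ≥ 0 be a real number. Then dist (P̃ + r • u) C ≤ d̂ if and only if r ≤ R(C, d̂, P̃, u). (The intersection of the ray from P̃ in direction u with the closed disk of radius d̂ around C is exactly the segment of length R(C, d̂, P̃, u).) -/
/-- The plane. -/
local notation "E" => EuclideanSpace ℝ (Fin 2)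

/-! The point `P + r • u` lies in the closed ball of radius `d` around `C` iff
`(r - s)² ≤ d² − ‖C − P‖² + s²` with `s = ⟪C − P, u⟫`; the left root `s - √(…)` of this
quadratic condition is `≤ 0` because `P` itself lies in the ball, so for `r ≥ 0` only the
right root `s + √(…)` matters. -/

theorem Real.sub_sq_le_iff_le_add_sqrt {r s D : ℝ} (hr : 0 ≤ r) (hs : s ^ 2 ≤ D) :
    (r - s) ^ 2 ≤ D ↔ r ≤ s + √D := by
  have hs_le : s ≤ √D := Real.le_sqrt_of_sq_le hs
  rw [Real.sq_le ((sq_nonneg s).trans hs)]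
  constructor
  · rintro ⟨-, h⟩
    linarith
  · intro h
    constructor <;> linarith

open scoped InnerProductSpace

variable {F : Type*} [NormedAddCommGroup F] [InnerProductSpace ℝ F]

theorem dist_add_smul_sq_of_norm_eq_one (C P u : F) (hu : ‖u‖ = 1) (r : ℝ) :
    dist (P + r • u) C ^ 2 = (r - ⟪C - P, u⟫_ℝ) ^ 2 + ‖C - P‖ ^ 2 - ⟪C - P, u⟫_ℝ ^ 2 := by
  rw [dist_eq_norm, show P + r • u - C = r • u - (C - P) by abel, norm_sub_sq_real,
    real_inner_smul_left, norm_smul, real_inner_comm, hu, Real.norm_eq_abs, mul_one, sq_abs]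
  ring

theorem dist_add_smul_le_iff_le_add_sqrt (C P u : F) (d : ℝ) (hd : ‖C - P‖ ≤ d)
    (hu : ‖u‖ = 1) {r : ℝ} (hr : 0 ≤ r) :
    dist (P + r • u) C ≤ d ↔
      r ≤ ⟪C - P, u⟫_ℝ + √(d ^ 2 - ‖C - P‖ ^ 2 + ⟪C - P, u⟫_ℝ ^ 2) := by
  have hd0 : 0 ≤ d := (norm_nonneg _).trans hd
  have hsq : ‖C - P‖ ^ 2 ≤ d ^ 2 := pow_le_pow_left₀ (norm_nonneg _) hd 2
  rw [← Real.sub_sq_le_iff_le_add_sqrt hr (by linarith), ← sq_le_sq₀ dist_nonneg hd0,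
    dist_add_smul_sq_of_norm_eq_one C P u hu r]
  constructor <;> intro h <;> linarith

/-- The intersection of the ray from `P̃` in direction `u` with the closed disk
of radius `d̂` around `C` is exactly the segment of length `R(C, d̂, P̃, u)`. -/
theorem dirUnc_ray_characterization (C Pt : E) (dhat : ℝ) (h : ‖C - Pt‖ ≤ dhat)
    (u : E) (hu : ‖u‖ = 1) (r : ℝ) (hr : 0 ≤ r) :
    dist (Pt + r • u) C ≤ dhat ↔ r ≤ dirUnc C Pt dhat u :=
  dist_add_smul_le_iff_le_add_sqrt C Pt u dhat h hu hr
end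

section
/- Suppose d̃ ≤ d̂ and let u be a unit vector. Then dist (P̃ + R(C, d̂, P̃, u) • u) C = d̂. (The point at distance R(C, d̂, P̃, u) from P̃ in direction u lies exactly on the circle of radius d̂ centered at C; this is the achievability fact underlying the completeness theorem.) -/
/-- The plane. -/
local notation "E" => EuclideanSpace ℝ (Fin 2)

/-! Along the line `t ↦ p + t • u`, the squared distance to `c` is a quadratic in `t` centred at
the foot of the perpendicular `t = s`, `s = ⟪c - p, u⟫`: it equals `(t - s)² + ‖c - p‖² - s²`.
Hence it equals `d̂²` exactly when `(t - s)² = d̂² - ‖c - p‖² + s²`, and `R` is the larger root. -/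

open RealInnerProductSpace

theorem dist_add_smul_sq {V : Type*} [NormedAddCommGroup V] [InnerProductSpace ℝ V]
    (p c u : V) (hu : ‖u‖ = 1) (t : ℝ) :
    dist (p + t • u) c ^ 2 = (t - ⟪c - p, u⟫) ^ 2 + ‖c - p‖ ^ 2 - ⟪c - p, u⟫ ^ 2 := by
  rw [dist_comm, dist_eq_norm, show c - (p + t • u) = (c - p) - t • u by abel,
    norm_sub_sq_real, inner_smul_right, norm_smul, Real.norm_eq_abs, hu, mul_one, sq_abs]
  ring

/-- The point at distance `R(C, d̂, P̃, u)` from `P̃` in direction `u` lies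
exactly on the circle of radius `d̂` centered at `C`. -/
theorem dirUnc_boundary (C Pt : E) (dhat : ℝ) (h : ‖C - Pt‖ ≤ dhat)
    (u : E) (hu : ‖u‖ = 1) :
    dist (Pt + dirUnc C Pt dhat u • u) C = dhat := by
  have hdhat : 0 ≤ dhat := (norm_nonneg _).trans h
  have hdisc : 0 ≤ dhat ^ 2 - ‖C - Pt‖ ^ 2 + ⟪C - Pt, u⟫ ^ 2 := by
    nlinarith [pow_le_pow_left₀ (norm_nonneg _) h 2, sq_nonneg ⟪C - Pt, u⟫]
  have hsq : dist (Pt + dirUnc C Pt dhat u • u) C ^ 2 = dhat ^ 2 := by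
    rw [dist_add_smul_sq _ _ _ hu, dirUnc, add_sub_cancel_left, Real.sq_sqrt hdisc]
    ring
  exact (pow_left_inj₀ dist_nonneg hdhat two_ne_zero).mp hsq
end

section
/- Theorem 1 (Soundness of PoLoc, order-statistic form). In the PoLoc setup, let f := n − H.card and assume f < n. Let r₁ ≤ r₂ ≤ … ≤ r_n be the values R(C i, d̂ i, P̃, u), i ∈ Fin n, listed in nondecreasing order. Then dist P P̃ ≤ r_{f+1}; that is, the (f+1)-th smallest directional uncertainty in the true direction of Waldo is at least the true deviation of Waldo from its claimed location, even if Waldo and up to f challengers are Byzantine. -/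
open scoped Classical

/-- The plane. -/
local notation "E" => EuclideanSpace ℝ (Fin 2)

/-- The `(k+1)`-th smallest (0-indexed `k`-th) value of a finite family of
reals: the value at position `k` after sorting in nondecreasing order. -/
noncomputable def kthSmallest {n : ℕ} (g : Fin n → ℝ) (k : Fin n) : ℝ :=
  (g ∘ Tuple.sort g) k


open scoped RealInnerProductSpace

/-!
An honest challenger at `C` with `‖C - P‖ ≤ d̂` constrains `t = ‖P - P̃‖`, where `P = P̃ + t u` lies on the
ray from `P̃` in direction `u`: expanding `‖(C - P̃) - t u‖² ≤ d̂²` gives the quadratic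
`(t - s)² ≤ d̂² - ‖C - P̃‖² + s²` in `t`, whose largest root is `R(C, d̂, P̃, u)`, so `t ≤ R`.
Hence every honest challenger has directional uncertainty at least `dist P P̃`. There are at least
`n - f` of them, so fewer than `f + 1` values lie below `dist P P̃`, which therefore bounds the
`(f+1)`-th smallest.
-/

theorem norm_le_inner_add_sqrt_of_norm_sub_le {F : Type*} [NormedAddCommGroup F]
    [InnerProductSpace ℝ F] {x v : F} {r : ℝ} (h : ‖x - v‖ ≤ r) :
    ‖v‖ ≤ ⟪x, ‖v‖⁻¹ • v⟫ + √(r ^ 2 - ‖x‖ ^ 2 + ⟪x, ‖v‖⁻¹ • v⟫ ^ 2) := by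
  have hs : ‖v‖ * ⟪x, ‖v‖⁻¹ • v⟫ = ⟪x, v⟫ := by
    rcases eq_or_ne v 0 with rfl | hv
    · simp
    · rw [real_inner_smul_right, mul_inv_cancel_left₀ (norm_ne_zero_iff.2 hv)]
  set s := ⟪x, ‖v‖⁻¹ • v⟫
  have hr : ‖x - v‖ ^ 2 ≤ r ^ 2 := pow_le_pow_left₀ (norm_nonneg _) h 2
  rw [norm_sub_sq_real] at hr
  have hquad : (‖v‖ - s) ^ 2 ≤ r ^ 2 - ‖x‖ ^ 2 + s ^ 2 := by linear_combination hr - 2 * hs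
  linarith [Real.le_sqrt_of_sq_le hquad]

theorem dist_le_dirUnc {C Pt P : E} {dhat : ℝ} (h : dist C P ≤ dhat) :
    dist P Pt ≤ dirUnc C Pt dhat (‖P - Pt‖⁻¹ • (P - Pt)) := by
  rw [dist_eq_norm, dirUnc]
  apply norm_le_inner_add_sqrt_of_norm_sub_le
  rwa [sub_sub_sub_cancel_right, ← dist_eq_norm]

theorem le_kthSmallest {n : ℕ} {g : Fin n → ℝ} {a : ℝ} {S : Finset (Fin n)}
    (hS : ∀ i ∈ S, a ≤ g i) {k : Fin n} (hk : n - S.card ≤ k) : a ≤ kthSmallest g k := by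
  by_contra! hlt
  have hdisj : Disjoint ((Finset.Iic k).image (Tuple.sort g)) S := by
    rw [Finset.disjoint_left]
    rintro _ hi hiS
    obtain ⟨j, hj, rfl⟩ := Finset.mem_image.1 hi
    have hjk : g (Tuple.sort g j) ≤ kthSmallest g k :=
      Tuple.monotone_sort g (Finset.mem_Iic.1 hj)
    exact (hjk.trans_lt hlt).not_ge (hS _ hiS)
  have hcard := (Finset.card_union_of_disjoint hdisj).symm.trans_le (Finset.card_le_univ _)
  rw [Finset.card_image_of_injective _ (Tuple.sort g).injective, Fin.card_Iic,
    Fintype.card_fin] at hcard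
  omega

theorem poloc_soundness_order_statistic_general (n : ℕ) (C : Fin n → E) (dhat : Fin n → ℝ)
    (Pt P : E) (H : Finset (Fin n))
    (hH : ∀ i ∈ H, dist (C i) P ≤ dhat i) (hf : n - H.card < n) :
    dist P Pt ≤
      kthSmallest (fun i => dirUnc (C i) Pt (dhat i) (‖P - Pt‖⁻¹ • (P - Pt)))
        ⟨n - H.card, hf⟩ :=
  le_kthSmallest (fun i hi => dist_le_dirUnc (hH i hi)) le_rfl

/-- Theorem 1 (Soundness of PoLoc, order-statistic form): with `f := n − H.card`
Byzantine challengers, the `(f+1)`-th smallest directional uncertainty in the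
true direction of Waldo is at least the true deviation of Waldo from its
claimed location. -/
theorem poloc_soundness_order_statistic (n : ℕ) (C : Fin n → E) (dhat : Fin n → ℝ)
    (Pt P : E) (hne : P ≠ Pt) (H : Finset (Fin n))
    (hH : ∀ i ∈ H, dist (C i) P ≤ dhat i) (hf : n - H.card < n) :
    dist P Pt ≤
      kthSmallest (fun i => dirUnc (C i) Pt (dhat i) (‖P - Pt‖⁻¹ • (P - Pt)))
        ⟨n - H.card, hf⟩ :=
  poloc_soundness_order_statistic_general n C dhat Pt P H hH hf
end
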